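/- arXiv:1904.01274 — 3 statements merged into one kernel-verified Lean document; each statement's English description precedes it below -/
import Mathlib

section
/- Let K̃_{2m} be the graph on 2m+1 vertices consisting of a complete graph K_{2m} together with one extra vertex adjacent to exactly m of the vertices of the K_{2m}. Then the smallest adjacency eigenvalue of K̃_{2m} tends to -∞ as m → ∞. -/
open Matrix Filter

/-- The smallest eigenvalue of a real matrix (infimum of its spectrum). -/
noncomputable def minEigM {n : Type*} [Fintype n] [DecidableEq n] (A : Matrix n n ℝ) : ℝ :=
  sInf (spectrum ℝ A)

/-- The largest eigenvalue of a real matrix (supremum of its spectrum). -/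
noncomputable def maxEigM {n : Type*} [Fintype n] [DecidableEq n] (A : Matrix n n ℝ) : ℝ :=
  sSup (spectrum ℝ A)

/-- The smallest adjacency eigenvalue of a finite simple graph. -/
noncomputable def graphMinEig {V : Type*} [Fintype V] [DecidableEq V] (G : SimpleGraph V) : ℝ := by
  classical exact minEigM (G.adjMatrix ℝ)

/-- The largest adjacency eigenvalue of a finite simple graph. -/
noncomputable def graphMaxEig {V : Type*} [Fintype V] [DecidableEq V] (G : SimpleGraph V) : ℝ := by
  classical exact maxEigM (G.adjMatrix ℝ)

/-- `K̃_{2m}`: the graph on `2m+1` vertices consisting of a complete graph on the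
vertices `1,…,2m` together with the extra vertex `0` adjacent to exactly the `m`
vertices `1,…,m`. -/
def tildeK (m : ℕ) : SimpleGraph (Fin (2 * m + 1)) where
  Adj a b := a ≠ b ∧ ((a ≠ 0 ∧ b ≠ 0) ∨ (a = 0 ∧ (b : ℕ) ≤ m) ∨ (b = 0 ∧ (a : ℕ) ≤ m))
  symm := ⟨by
    rintro a b ⟨h1, h2⟩
    exact ⟨h1.symm, by tauto⟩⟩
  loopless := ⟨by rintro a ⟨h1, _⟩; exact h1 rfl⟩

/-! On the clique vertices the adjacency matrix of `K̃_{2m}` is `𝟙𝟙ᵀ - I`, and the extra vertex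
`0` adds `e₀wᵀ + we₀ᵀ`, where `w` is the indicator of its neighbours. The vector
`x = (t, -1, …, -1, 1, …, 1)` (`m` entries of each sign) sums to zero on the clique, so
`xᵀAx = -2m + 2t·(-m)`, while `‖x‖² = t² + 2m`. For `t = √(2m)` the Rayleigh quotient is
`-(√(2m) + 1)/2`, an upper bound for the smallest eigenvalue that tends to `-∞`. -/

open scoped MatrixOrder

lemma sInf_spectrum_mul_dotProduct_self_le {n : Type*} [Fintype n] [DecidableEq n]
    {A : Matrix n n ℝ} (hA : A.IsHermitian) (x : n → ℝ) :
    sInf (spectrum ℝ A) * (x ⬝ᵥ x) ≤ x ⬝ᵥ (A *ᵥ x) := by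
  have hle : algebraMap ℝ (Matrix n n ℝ) (sInf (spectrum ℝ A)) ≤ A :=
    (algebraMap_le_iff_le_spectrum hA.isSelfAdjoint).2 fun _ hy =>
      csInf_le (finite_real_spectrum (A := A)).bddBelow hy
  simpa [sub_mulVec, Algebra.algebraMap_eq_smul_one, smul_mulVec, dotProduct_smul] using
    (Matrix.le_iff.1 hle).dotProduct_mulVec_nonneg x

lemma graphMinEig_mul_dotProduct_self_le {V : Type*} [Fintype V] [DecidableEq V]
    (G : SimpleGraph V) [DecidableRel G.Adj] (x : V → ℝ) :
    graphMinEig G * (x ⬝ᵥ x) ≤ x ⬝ᵥ (G.adjMatrix ℝ *ᵥ x) := by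
  have hG : graphMinEig G = sInf (spectrum ℝ (G.adjMatrix ℝ)) := by
    unfold graphMinEig minEigM
    congr!
  rw [hG]
  exact sInf_spectrum_mul_dotProduct_self_le (G.isHermitian_adjMatrix ℝ) x

lemma dotProduct_vecMulVec_mulVec {α n : Type*} [CommSemiring α] [Fintype n] (a b x : n → α) :
    x ⬝ᵥ (vecMulVec a b *ᵥ x) = (x ⬝ᵥ a) * (b ⬝ᵥ x) := by
  simp [vecMulVec_mulVec, dotProduct_smul, mul_comm]

lemma dotProduct_diagonal_mulVec {α n : Type*} [NonUnitalNonAssocSemiring α] [Fintype n]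
    [DecidableEq n] (d x : n → α) : x ⬝ᵥ (diagonal d *ᵥ x) = x ⬝ᵥ (d * x) :=
  congrArg _ (funext (mulVec_diagonal d x))

lemma cons_mul_cons {α : Type*} [Mul α] {n : ℕ} (a b : α) (v w : Fin n → α) :
    vecCons a v * vecCons b w = vecCons (a * b) (v * w) := by
  ext i; refine i.cases ?_ ?_ <;> simp

def firstHalf (m : ℕ) : Fin (2 * m) → ℝ := fun i => if (i : ℕ) < m then 1 else 0

lemma sum_firstHalf (m : ℕ) : ∑ i, firstHalf m i = m := by
  simp [firstHalf, Finset.sum_boole, Fin.card_filter_val_lt, show m ≤ 2 * m by omega]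

def halfSign (m : ℕ) : Fin (2 * m) → ℝ := fun i => 1 - 2 * firstHalf m i

lemma halfSign_mul_self (m : ℕ) (i : Fin (2 * m)) : halfSign m i * halfSign m i = 1 := by
  unfold halfSign firstHalf; split_ifs <;> norm_num

lemma firstHalf_mul_halfSign (m : ℕ) (i : Fin (2 * m)) :
    firstHalf m i * halfSign m i = -firstHalf m i := by
  unfold halfSign firstHalf; split_ifs <;> norm_num

lemma one_dotProduct_halfSign (m : ℕ) : 1 ⬝ᵥ halfSign m = 0 := by
  simp [halfSign, dotProduct, Finset.sum_sub_distrib, ← Finset.mul_sum, sum_firstHalf]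

lemma halfSign_dotProduct_self (m : ℕ) : halfSign m ⬝ᵥ halfSign m = 2 * m := by
  simp [dotProduct, halfSign_mul_self]

lemma firstHalf_dotProduct_halfSign (m : ℕ) : firstHalf m ⬝ᵥ halfSign m = -m := by
  simp [dotProduct, firstHalf_mul_halfSign, sum_firstHalf]

@[simp] lemma tildeK_adj_zero_succ {m : ℕ} {i : Fin (2 * m)} :
    (tildeK m).Adj 0 i.succ ↔ (i : ℕ) < m := by
  change _ ∧ _ ↔ _
  simp only [ne_eq, (Fin.succ_ne_zero i).symm, Fin.succ_ne_zero, Fin.val_succ, not_false_eq_true,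
    true_and, not_true_eq_false, false_and, false_or, or_false, Nat.add_one_le_iff]

@[simp] lemma tildeK_adj_succ_zero {m : ℕ} {i : Fin (2 * m)} :
    (tildeK m).Adj i.succ 0 ↔ (i : ℕ) < m :=
  (tildeK m).adj_comm _ _ |>.trans tildeK_adj_zero_succ

@[simp] lemma tildeK_adj_succ_succ {m : ℕ} {i j : Fin (2 * m)} :
    (tildeK m).Adj i.succ j.succ ↔ i ≠ j := by
  change _ ∧ _ ↔ _
  simp only [ne_eq, Fin.succ_inj, Fin.succ_ne_zero, not_false_eq_true, false_and, or_false,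
    and_true]

lemma adjMatrix_tildeK (m : ℕ) [DecidableRel (tildeK m).Adj] :
    (tildeK m).adjMatrix ℝ = vecMulVec (vecCons 0 1) (vecCons 0 1) - diagonal (vecCons 0 1)
      + vecMulVec (vecCons 1 0) (vecCons 0 (firstHalf m))
      + vecMulVec (vecCons 0 (firstHalf m)) (vecCons 1 0) := by
  ext i j
  simp only [SimpleGraph.adjMatrix_apply, Matrix.add_apply, Matrix.sub_apply, vecMulVec_apply,
    diagonal_apply]
  refine Fin.cases ?_ (fun i => ?_) i <;> refine Fin.cases ?_ (fun j => ?_) j <;>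
    simp [firstHalf, eq_comm]
  split_ifs <;> norm_num

lemma tildeK_dotProduct_adjMatrix_mulVec (m : ℕ) [DecidableRel (tildeK m).Adj] (t : ℝ) :
    vecCons t (halfSign m) ⬝ᵥ ((tildeK m).adjMatrix ℝ *ᵥ vecCons t (halfSign m)) =
      -2 * m * (t + 1) := by
  rw [adjMatrix_tildeK, add_mulVec, add_mulVec, sub_mulVec, dotProduct_add, dotProduct_add,
    dotProduct_sub, dotProduct_vecMulVec_mulVec, dotProduct_vecMulVec_mulVec,
    dotProduct_vecMulVec_mulVec, dotProduct_diagonal_mulVec]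
  simp only [cons_mul_cons, cons_dotProduct_cons, one_dotProduct_halfSign, one_mul, zero_dotProduct,
    halfSign_dotProduct_self, firstHalf_dotProduct_halfSign, dotProduct_comm (halfSign m)]
  ring

lemma graphMinEig_tildeK_le {m : ℕ} (hm : 0 < m) :
    graphMinEig (tildeK m) ≤ -(√(2 * m) + 1) / 2 := by
  classical
  have h := graphMinEig_mul_dotProduct_self_le (tildeK m) (vecCons √(2 * m) (halfSign m))
  rw [tildeK_dotProduct_adjMatrix_mulVec, cons_dotProduct_cons, halfSign_dotProduct_self,
    Real.mul_self_sqrt (by positivity)] at h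
  have hm' : (0 : ℝ) < 2 * m := by positivity
  rw [le_div_iff₀ two_pos]
  refine le_of_mul_le_mul_left ?_ hm'
  linarith

/-- The smallest adjacency eigenvalue of `K̃_{2m}` tends to `-∞` as `m → ∞`. -/
theorem stmt2 : Tendsto (fun m : ℕ => graphMinEig (tildeK m)) atTop atBot := by
  have hsqrt : Tendsto (fun m : ℕ => √(2 * m)) atTop atTop :=
    Real.tendsto_sqrt_atTop.comp (tendsto_natCast_atTop_atTop.const_mul_atTop two_pos)
  have hbound : Tendsto (fun m : ℕ => -(√(2 * m) + 1) / 2) atTop atBot :=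
    (tendsto_neg_atTop_atBot.comp (tendsto_atTop_add_const_right _ 1 hsqrt)).atBot_div_const
      two_pos
  exact tendsto_atBot_mono' _ ((eventually_gt_atTop 0).mono fun _ => graphMinEig_tildeK_le) hbound
end

section
/- Let h = (H, ℓ) be a Hoffman graph and let h' be an induced Hoffman subgraph of h. Then the smallest eigenvalue of h' is at least the smallest eigenvalue of h. -/
open Matrix Filter

/-- A Hoffman graph: a graph with vertices labelled fat/slim such that fat vertices are
pairwise non-adjacent and every fat vertex has a slim neighbor. -/
structure HoffmanGraph (V : Type*) where
  G : SimpleGraph V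
  isFat : V → Bool
  fat_not_adj : ∀ u v, isFat u → isFat v → ¬ G.Adj u v
  fat_has_slim : ∀ u, isFat u → ∃ v, isFat v = false ∧ G.Adj u v

/-- The special matrix `S(h) = A_s - C Cᵀ` of a Hoffman graph, indexed by slim vertices. -/
noncomputable def HoffmanGraph.specialMatrix {V : Type*} [Fintype V] [DecidableEq V]
    (h : HoffmanGraph V) :
    Matrix {v // h.isFat v = false} {v // h.isFat v = false} ℝ := by
  classical
  exact fun a b => (h.G.adjMatrix ℝ) a.1 b.1 -
    ∑ f : {v // h.isFat v = true}, (h.G.adjMatrix ℝ) a.1 f.1 * (h.G.adjMatrix ℝ) b.1 f.1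

/-- The smallest eigenvalue of a Hoffman graph: the smallest eigenvalue of its
special matrix. -/
noncomputable def HoffmanGraph.minEig {V : Type*} [Fintype V] [DecidableEq V]
    (h : HoffmanGraph V) : ℝ :=
  minEigM h.specialMatrix

/-!
Restricted to the slim vertices of `h'`, the special matrix of `h'` is the principal submatrix
of `S(h)` plus `∑ c_g c_gᵀ`, the sum running over the fat vertices `g` of `h` outside `h'`
(with `c_g` the column at `g` of `C = slimFatAdj`). Hence `S(h')` dominates a principal
submatrix of `S(h)` in the Loewner order, and both passing to a principal submatrix and going up
in the Loewner order can only raise the smallest eigenvalue. If `h'` has no slim vertices its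
smallest eigenvalue is `sInf ∅ = 0`, and the claim reduces to `S(h)` having a nonpositive
diagonal.
-/

namespace Matrix

variable {n : Type*} [Fintype n] [DecidableEq n] {M : Matrix n n ℝ}

lemma minEigM_of_isEmpty [IsEmpty n] (M : Matrix n n ℝ) : minEigM M = 0 := by
  rw [minEigM, spectrum.of_subsingleton, Real.sInf_empty]

lemma IsHermitian.le_minEigM_iff [Nonempty n] (hM : M.IsHermitian) (c : ℝ) :
    c ≤ minEigM M ↔ (M - c • 1).PosSemidef := by
  have hfin : (spectrum ℝ M).Finite :=
    hM.spectrum_real_eq_range_eigenvalues ▸ Set.finite_range _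
  have hne : (spectrum ℝ M).Nonempty :=
    hM.spectrum_real_eq_range_eigenvalues ▸ Set.range_nonempty _
  have hH : (M - c • 1).IsHermitian := hM.sub (isHermitian_one.smul (IsSelfAdjoint.all c))
  rw [minEigM, le_csInf_iff hfin.bddBelow hne, posSemidef_iff_isHermitian_and_spectrum_nonneg,
    and_iff_right hH, ← Algebra.algebraMap_eq_smul_one, ← spectrum.sub_singleton_eq]
  simp [Set.subset_def]

lemma IsHermitian.minEigM_le_diag (hM : M.IsHermitian) (i : n) : minEigM M ≤ M i i := by
  have : Nonempty n := ⟨i⟩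
  simpa [sub_nonneg] using ((hM.le_minEigM_iff _).1 le_rfl).diag_nonneg (i := i)

lemma IsHermitian.minEigM_le_minEigM_submatrix {m : Type*} [Fintype m] [DecidableEq m]
    [Nonempty m] (hM : M.IsHermitian) (e : m ↪ n) : minEigM M ≤ minEigM (M.submatrix e e) := by
  have : Nonempty n := Nonempty.map e ‹_›
  rw [(hM.submatrix e).le_minEigM_iff]
  simpa [submatrix_sub, submatrix_smul, submatrix_one_embedding] using
    ((hM.le_minEigM_iff _).1 le_rfl).submatrix e

lemma IsHermitian.minEigM_le_of_posSemidef_sub [Nonempty n] {N : Matrix n n ℝ}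
    (hM : M.IsHermitian) (hMN : (N - M).PosSemidef) : minEigM M ≤ minEigM N := by
  have hN : N.IsHermitian := by simpa using hMN.isHermitian.add hM
  rw [hN.le_minEigM_iff]
  simpa using hMN.add ((hM.le_minEigM_iff _).1 le_rfl)

lemma posSemidef_mul_transpose_sub_mul_transpose_submatrix {m k k' : Type*} [Fintype m]
    [Fintype k] [Fintype k'] [DecidableEq k] (C : Matrix m k ℝ) {κ : k' → k}
    (hκ : Function.Injective κ) :
    (C * Cᵀ - C.submatrix id κ * (C.submatrix id κ)ᵀ).PosSemidef := by
  have : C * Cᵀ - C.submatrix id κ * (C.submatrix id κ)ᵀ =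
      ∑ g ∈ (Finset.univ.image κ)ᶜ, vecMulVec (fun a ↦ C a g) (fun a ↦ C a g) := by
    ext a b
    simp only [sub_apply, mul_apply, transpose_apply, submatrix_apply, id, sum_apply,
      vecMulVec_apply]
    rw [← Finset.sum_compl_add_sum (Finset.univ.image κ), Finset.sum_image hκ.injOn]
    ring
  rw [this]
  exact posSemidef_sum _ fun g _ ↦ posSemidef_vecMulVec_self_star _

end Matrix

namespace HoffmanGraph

section BlockForm

variable {V : Type*} (h : HoffmanGraph V)

open scoped Classical in
noncomputable def slimAdj : Matrix {v // h.isFat v = false} {v // h.isFat v = false} ℝ :=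
  (h.G.adjMatrix ℝ).submatrix Subtype.val Subtype.val

open scoped Classical in
noncomputable def slimFatAdj : Matrix {v // h.isFat v = false} {v // h.isFat v = true} ℝ :=
  (h.G.adjMatrix ℝ).submatrix Subtype.val Subtype.val

lemma isHermitian_slimAdj : h.slimAdj.IsHermitian := by
  classical
  exact (SimpleGraph.isSymm_adjMatrix h.G).submatrix Subtype.val

variable [Fintype V]

lemma posSemidef_slimFatAdj_mul_transpose : (h.slimFatAdj * h.slimFatAdjᵀ).PosSemidef := by
  simpa [conjTranspose_eq_transpose_of_trivial] using
    posSemidef_self_mul_conjTranspose h.slimFatAdj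

variable [DecidableEq V]

lemma specialMatrix_eq : h.specialMatrix = h.slimAdj - h.slimFatAdj * h.slimFatAdjᵀ := by
  ext a b
  simp only [specialMatrix, slimAdj, slimFatAdj, Matrix.sub_apply, mul_apply, transpose_apply,
    submatrix_apply]

lemma isHermitian_specialMatrix : h.specialMatrix.IsHermitian := by
  rw [specialMatrix_eq]
  exact h.isHermitian_slimAdj.sub h.posSemidef_slimFatAdj_mul_transpose.isHermitian

lemma minEig_nonpos : h.minEig ≤ 0 := by
  rcases isEmpty_or_nonempty {v // h.isFat v = false} with _ | ⟨⟨a⟩⟩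
  · exact (minEigM_of_isEmpty _).le
  · have hdiag : h.slimAdj a a = 0 := by simp [slimAdj]
    calc h.minEig ≤ h.specialMatrix a a := h.isHermitian_specialMatrix.minEigM_le_diag a
      _ ≤ 0 := by
        rw [specialMatrix_eq, Matrix.sub_apply, hdiag, zero_sub, neg_nonpos]
        exact h.posSemidef_slimFatAdj_mul_transpose.diag_nonneg

end BlockForm

section InducedSubgraph

variable {V V' : Type*} {h : HoffmanGraph V} {h' : HoffmanGraph V'} {f : V' ↪ V}

def labelEmbedding (hfat : ∀ a, h'.isFat a = h.isFat (f a)) (b : Bool) :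
    {v // h'.isFat v = b} ↪ {v // h.isFat v = b} :=
  f.subtypeMap fun a ha => (hfat a).symm.trans ha

lemma slimAdj_eq_submatrix (hadj : ∀ a b, h'.G.Adj a b ↔ h.G.Adj (f a) (f b))
    (hfat : ∀ a, h'.isFat a = h.isFat (f a)) :
    h'.slimAdj = h.slimAdj.submatrix (labelEmbedding hfat false) (labelEmbedding hfat false) := by
  ext a b
  simp only [slimAdj, labelEmbedding, Function.Embedding.subtypeMap, submatrix_apply,
    SimpleGraph.adjMatrix_apply]
  congr 1
  exact propext (hadj a b)

lemma slimFatAdj_eq_submatrix (hadj : ∀ a b, h'.G.Adj a b ↔ h.G.Adj (f a) (f b))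
    (hfat : ∀ a, h'.isFat a = h.isFat (f a)) :
    h'.slimFatAdj =
      h.slimFatAdj.submatrix (labelEmbedding hfat false) (labelEmbedding hfat true) := by
  ext a b
  simp only [slimFatAdj, labelEmbedding, Function.Embedding.subtypeMap, submatrix_apply,
    SimpleGraph.adjMatrix_apply]
  congr 1
  exact propext (hadj a b)

variable [Fintype V] [DecidableEq V] [Fintype V'] [DecidableEq V']

lemma posSemidef_specialMatrix_sub_submatrix
    (hadj : ∀ a b, h'.G.Adj a b ↔ h.G.Adj (f a) (f b))
    (hfat : ∀ a, h'.isFat a = h.isFat (f a)) :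
    (h'.specialMatrix - h.specialMatrix.submatrix (labelEmbedding hfat false)
      (labelEmbedding hfat false)).PosSemidef := by
  set ι := labelEmbedding hfat false
  set C := h.slimFatAdj.submatrix ι id
  have hsub : h.specialMatrix.submatrix ι ι = h.slimAdj.submatrix ι ι - C * Cᵀ := by
    ext a b
    simp [specialMatrix_eq, C, mul_apply]
  rw [hsub, specialMatrix_eq, slimAdj_eq_submatrix hadj hfat, slimFatAdj_eq_submatrix hadj hfat,
    sub_sub_sub_cancel_left]
  exact posSemidef_mul_transpose_sub_mul_transpose_submatrix C
    (labelEmbedding hfat true).injective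

end InducedSubgraph

end HoffmanGraph

/-- The smallest eigenvalue of an induced Hoffman subgraph is at least the smallest
eigenvalue of the ambient Hoffman graph. -/
theorem stmt5 {V V' : Type*} [Fintype V] [DecidableEq V] [Fintype V'] [DecidableEq V']
    (h : HoffmanGraph V) (h' : HoffmanGraph V') (f : V' ↪ V)
    (hadj : ∀ a b, h'.G.Adj a b ↔ h.G.Adj (f a) (f b))
    (hfat : ∀ a, h'.isFat a = h.isFat (f a)) :
    h.minEig ≤ h'.minEig := by
  rcases isEmpty_or_nonempty {v // h'.isFat v = false} with _ | _
  · exact h.minEig_nonpos.trans (minEigM_of_isEmpty _).ge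
  · let ι := HoffmanGraph.labelEmbedding hfat false
    calc h.minEig ≤ minEigM (h.specialMatrix.submatrix ι ι) :=
          h.isHermitian_specialMatrix.minEigM_le_minEigM_submatrix ι
      _ ≤ h'.minEig := (h.isHermitian_specialMatrix.submatrix ι).minEigM_le_of_posSemidef_sub
          (HoffmanGraph.posSemidef_specialMatrix_sub_submatrix hadj hfat)
end

section
/- Let c_n be the Hoffman graph obtained from the complete graph K_{n+1} (all slim) by attaching one fat vertex to exactly n of its vertices. Then λ_min(c_n) = (−1 − √(1 + 4n))/2. -/
open Matrix Filter

/-- `c_n`: the Hoffman graph obtained from the complete graph `K_{n+1}` (all slim) by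
attaching one fat vertex (`none`) to exactly the `n` vertices of index `< n`. -/
def cN (n : ℕ) (hn : 0 < n) : HoffmanGraph (Option (Fin (n + 1))) where
  G :=
    { Adj := fun x y =>
        match x, y with
        | some a, some b => a ≠ b
        | some a, none => (a : ℕ) < n
        | none, some a => (a : ℕ) < n
        | none, none => False
      symm := by
        constructor
        rintro (_ | a) (_ | b) hadj
        · exact hadj
        · exact hadj
        · exact hadj
        · exact hadj.symm
      loopless := by
        constructor
        rintro (_ | a) hadj
        · exact hadj
        · exact hadj rfl }
  isFat := fun x => x.isNone
  fat_not_adj := by rintro (_ | u) (_ | v) hu hv hadj <;> simp_all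
  fat_has_slim := by
    rintro (_ | u) hu
    · exact ⟨some ⟨0, by omega⟩, rfl, hn⟩
    · simp at hu

/-!
Write `c` for the indicator of the `n` slim vertices adjacent to the fat vertex, so that the
special matrix is `S = J - I - c cᵀ`. Then `(S + I) x` equals `x_last` on the first `n`
coordinates and `∑ x` on the last one. An eigenvector for `μ ≠ -1` is therefore constant on the
first `n` coordinates, with last coordinate `μ + 1` times that constant, which forces
`μ² + μ = n`; conversely `(1, …, 1, μ + 1)` is an eigenvector for each root of `μ² + μ = n`.
The smaller root `(-1 - √(1 + 4n))/2` is at most `-1`, so it is the least eigenvalue.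
-/

lemma Matrix.mem_spectrum_iff_exists_mulVec_eq_smul {ι K : Type*} [Fintype ι] [DecidableEq ι]
    [Field K] (A : Matrix ι ι K) (μ : K) :
    μ ∈ spectrum K A ↔ ∃ x ≠ 0, A *ᵥ x = μ • x := by
  rw [← Matrix.spectrum_toLin', ← Module.End.hasEigenvalue_iff_mem_spectrum]
  constructor
  · intro h
    obtain ⟨x, hx⟩ := h.exists_hasEigenvector
    exact ⟨x, hx.2, hx.apply_eq_smul⟩
  · rintro ⟨x, hx0, hx⟩
    exact Module.End.hasEigenvalue_of_hasEigenvector ⟨by simpa [Module.End.mem_eigenspace_iff], hx0⟩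

lemma Matrix.mulVec_eq_smul_iff_add_one {ι R : Type*} [Fintype ι] [DecidableEq ι] [Ring R]
    (A : Matrix ι ι R) (x : ι → R) (μ : R) :
    A *ᵥ x = μ • x ↔ (A + 1) *ᵥ x = (μ + 1) • x := by
  rw [add_mulVec, one_mulVec, add_smul, one_smul, add_left_inj]

lemma neg_one_sub_sqrt_div_two_le {t μ : ℝ} (h : μ ^ 2 + μ ≤ t) :
    (-1 - √(1 + 4 * t)) / 2 ≤ μ := by
  have : |2 * μ + 1| ≤ √(1 + 4 * t) := Real.abs_le_sqrt (by nlinarith)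
  linarith [neg_abs_le (2 * μ + 1)]

lemma neg_one_sub_sqrt_div_two_sq_add_self {t : ℝ} (ht : 0 ≤ 1 + 4 * t) :
    ((-1 - √(1 + 4 * t)) / 2) ^ 2 + (-1 - √(1 + 4 * t)) / 2 = t := by
  nlinarith [Real.sq_sqrt ht]

def cNIncidence (n : ℕ) : Fin (n + 1) → ℝ := fun i => if (i : ℕ) < n then 1 else 0

@[simp] lemma cNIncidence_castSucc (n : ℕ) (i : Fin n) : cNIncidence n i.castSucc = 1 := by
  simp [cNIncidence]

@[simp] lemma cNIncidence_last (n : ℕ) : cNIncidence n (Fin.last n) = 0 := by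
  simp [cNIncidence]

noncomputable def cNSpecial (n : ℕ) : Matrix (Fin (n + 1)) (Fin (n + 1)) ℝ :=
  (⊤ : SimpleGraph (Fin (n + 1))).adjMatrix ℝ - vecMulVec (cNIncidence n) (cNIncidence n)

def cNSlimEquiv (n : ℕ) (hn : 0 < n) : Fin (n + 1) ≃ {v // (cN n hn).isFat v = false} :=
  ((Equiv.subtypeEquivRight fun v => by cases v <;> simp [cN]).trans
    (Equiv.optionIsSomeEquiv _)).symm

lemma cN_adj_some_some {n : ℕ} {hn : 0 < n} {a b : Fin (n + 1)} :
    (cN n hn).G.Adj (some a) (some b) ↔ a ≠ b := Iff.rfl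

lemma cN_adj_some_none {n : ℕ} {hn : 0 < n} {a : Fin (n + 1)} :
    (cN n hn).G.Adj (some a) none ↔ (a : ℕ) < n := Iff.rfl

lemma cNSlimEquiv_symm_some {n : ℕ} {hn : 0 < n} {a : Fin (n + 1)} (h) :
    (cNSlimEquiv n hn).symm ⟨some a, h⟩ = a := rfl

lemma cN_specialMatrix (n : ℕ) (hn : 0 < n) :
    (cN n hn).specialMatrix = reindex (cNSlimEquiv n hn) (cNSlimEquiv n hn) (cNSpecial n) := by
  let : Unique {v // (cN n hn).isFat v = true} :=
    { default := ⟨none, rfl⟩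
      uniq := by
        rintro ⟨_ | a, h⟩
        · rfl
        · simp [cN] at h }
  ext ⟨_ | a, ha⟩ ⟨_ | b, hb⟩
  all_goals simp [cN] at ha hb
  have hfat : ((default : {v // (cN n hn).isFat v = true}) : Option (Fin (n + 1))) = none := rfl
  simp [HoffmanGraph.specialMatrix, cNSpecial, cNSlimEquiv_symm_some, hfat, cN_adj_some_some,
    cN_adj_some_none, vecMulVec_apply, cNIncidence]

lemma cNSpecial_add_one_mulVec (n : ℕ) (x : Fin (n + 1) → ℝ) :
    (cNSpecial n + 1) *ᵥ x = fun i => ∑ j, x j - cNIncidence n i * (cNIncidence n ⬝ᵥ x) := by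
  have : cNSpecial n + 1 = of 1 - vecMulVec (cNIncidence n) (cNIncidence n) := by
    rw [cNSpecial, SimpleGraph.adjMatrix_completeGraph_eq_of_one_sub_one]
    abel
  rw [this, sub_mulVec, vecMulVec_mulVec]
  ext i
  simp [mulVec, dotProduct, mul_comm]

lemma cNSpecial_add_one_mulVec_castSucc (n : ℕ) (x : Fin (n + 1) → ℝ) (i : Fin n) :
    ((cNSpecial n + 1) *ᵥ x) i.castSucc = x (Fin.last n) := by
  simp [cNSpecial_add_one_mulVec, Fin.sum_univ_castSucc, dotProduct]

lemma cNSpecial_add_one_mulVec_last (n : ℕ) (x : Fin (n + 1) → ℝ) :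
    ((cNSpecial n + 1) *ᵥ x) (Fin.last n) = ∑ j, x j := by
  simp [cNSpecial_add_one_mulVec]

lemma eq_neg_one_or_sq_add_self_of_mem_spectrum_cNSpecial {n : ℕ} {μ : ℝ}
    (hμ : μ ∈ spectrum ℝ (cNSpecial n)) : μ = -1 ∨ μ ^ 2 + μ = n := by
  obtain ⟨x, hx0, hx⟩ := (mem_spectrum_iff_exists_mulVec_eq_smul _ _).1 hμ
  rw [mulVec_eq_smul_iff_add_one] at hx
  rcases eq_or_ne (μ + 1) 0 with hμ1 | hμ1
  · left; linarith
  right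
  set a := x (Fin.last n)
  have hfirst : ∀ i : Fin n, x i.castSucc = a / (μ + 1) := fun i => by
    rw [eq_div_iff hμ1, mul_comm, ← smul_eq_mul, ← Pi.smul_apply, ← hx,
      cNSpecial_add_one_mulVec_castSucc]
  have hlast : (μ + 1) * a = n * (a / (μ + 1)) + a := by
    rw [← smul_eq_mul, ← Pi.smul_apply, ← hx, cNSpecial_add_one_mulVec_last,
      Fin.sum_univ_castSucc]
    simp [hfirst, a]
  have hquad : a * (μ ^ 2 + μ) = a * n := by
    field_simp at hlast
    linear_combination hlast
  have ha : a ≠ 0 := by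
    intro ha
    apply hx0
    ext i
    induction i using Fin.lastCases with
    | last => exact ha
    | cast i => simp [hfirst, ha]
  exact mul_left_cancel₀ ha hquad

lemma mem_spectrum_cNSpecial_of_sq_add_self {n : ℕ} (hn : 0 < n) {μ : ℝ}
    (hμ : μ ^ 2 + μ = n) : μ ∈ spectrum ℝ (cNSpecial n) := by
  rw [mem_spectrum_iff_exists_mulVec_eq_smul]
  refine ⟨Fin.snoc (fun _ => 1) (μ + 1), fun h => ?_, ?_⟩
  · exact one_ne_zero <| by
      simpa only [Fin.snoc_castSucc, Pi.zero_apply] using congrFun h (Fin.castSucc ⟨0, hn⟩)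
  rw [mulVec_eq_smul_iff_add_one]
  ext i
  induction i using Fin.lastCases with
  | last =>
    rw [cNSpecial_add_one_mulVec_last, Fin.sum_univ_castSucc]
    simp only [Fin.snoc_castSucc, Fin.snoc_last, Finset.sum_const, Finset.card_univ,
      Fintype.card_fin, nsmul_eq_mul, mul_one, Pi.smul_apply, smul_eq_mul]
    linear_combination -hμ
  | cast i => simp [cNSpecial_add_one_mulVec_castSucc]

/-- `λ_min(c_n) = (-1 - √(1 + 4n))/2`. -/
theorem stmt13 (n : ℕ) (hn : 0 < n) :
    (cN n hn).minEig = (-1 - Real.sqrt (1 + 4 * (n : ℝ))) / 2 := by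
  have hspec : spectrum ℝ (cN n hn).specialMatrix = spectrum ℝ (cNSpecial n) := by
    rw [cN_specialMatrix]
    exact AlgEquiv.spectrum_eq (reindexAlgEquiv ℝ ℝ _) _
  rw [HoffmanGraph.minEig, minEigM, hspec]
  refine IsLeast.csInf_eq ⟨mem_spectrum_cNSpecial_of_sq_add_self hn ?_, fun μ hμ => ?_⟩
  · exact neg_one_sub_sqrt_div_two_sq_add_self (by positivity)
  apply neg_one_sub_sqrt_div_two_le
  rcases eq_neg_one_or_sq_add_self_of_mem_spectrum_cNSpecial hμ with rfl | h
  · norm_num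
  · exact h.le
end
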